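/- arXiv:2602.17541 — 6 statements merged into one kernel-verified Lean document; each statement's English description precedes it below -/
import Mathlib

section
/- Let N ≥ 2 and k ≤ N−2 be natural numbers, and let b, c, b', c' : ℕ → ℕ take values in {0,1}. Assume c(N−1) = 0 and, for every j with k+1 ≤ j ≤ N−1, b'(j) + 2·c'(j) ≥ b(j) + c(j−1). Then Value(b',c',k+1,N−1) ≥ ⌊Value(b,c,k,N−1) / 2⌋ (integer division). -/
/-- The value of the partial train with first wagon `k` and last wagon `m`:
`Value(b,c,k,m) = Σ_{j=k}^{m} 2^(j−k) · (b j + 2·c j)`. -/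
def trainValue (b c : ℕ → ℕ) (k m : ℕ) : ℕ :=
  ∑ j ∈ Finset.Icc k m, 2 ^ (j - k) * (b j + 2 * c j)

lemma shift_lemma (b c : ℕ → ℕ) (k n : ℕ) :
    ∑ j ∈ Finset.Icc k (k + n), 2 ^ (j - k) * (b j + 2 * c j)
      = b k + 2 * ∑ j ∈ Finset.Icc (k + 1) (k + n), 2 ^ (j - (k + 1)) * (b j + c (j - 1))
        + 2 ^ (n + 1) * c (k + n) := by
  induction n with
  | zero => simp [mul_comm]
  | succ n ih =>
    have h1 : k ≤ k + n := Nat.le_add_right _ _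
    have h2 : k + 1 ≤ k + (n + 1) := by omega
    rw [show k + (n + 1) = (k + n) + 1 from rfl,
      Finset.sum_Icc_succ_top (by omega : k ≤ k + n + 1),
      Finset.sum_Icc_succ_top (by omega : k + 1 ≤ k + n + 1), ih]
    have e1 : k + n + 1 - k = n + 1 := by omega
    have e2 : k + n + 1 - (k + 1) = n := by omega
    have e3 : k + n + 1 - 1 = k + n := by omega
    rw [e1, e2, e3]
    ring

theorem stmt_1 (N k : ℕ) (hN : 2 ≤ N) (hk : k ≤ N - 2)
    (b c b' c' : ℕ → ℕ)
    (hb : ∀ j, b j ≤ 1) (hc : ∀ j, c j ≤ 1)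
    (hb' : ∀ j, b' j ≤ 1) (hc' : ∀ j, c' j ≤ 1)
    (hlast : c (N - 1) = 0)
    (hstep : ∀ j, k + 1 ≤ j → j ≤ N - 1 → b' j + 2 * c' j ≥ b j + c (j - 1)) :
    trainValue b' c' (k + 1) (N - 1) ≥ trainValue b c k (N - 1) / 2 := by
  obtain ⟨n, hn⟩ : ∃ n, N - 1 = k + n := ⟨N - 1 - k, by omega⟩
  have hV : trainValue b c k (N - 1)
      = b k + 2 * ∑ j ∈ Finset.Icc (k + 1) (N - 1), 2 ^ (j - (k + 1)) * (b j + c (j - 1)) := by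
    unfold trainValue
    rw [hn, shift_lemma, ← hn, hlast]
    ring
  have hT : ∑ j ∈ Finset.Icc (k + 1) (N - 1), 2 ^ (j - (k + 1)) * (b j + c (j - 1))
      ≤ trainValue b' c' (k + 1) (N - 1) := by
    unfold trainValue
    apply Finset.sum_le_sum
    intro j hj
    rw [Finset.mem_Icc] at hj
    exact Nat.mul_le_mul_left _ (hstep j hj.1 hj.2)
  rw [hV]
  have hbk := hb k
  omega
end

section
/- Let N ≥ 2 be a natural number and let b, c, b', c' : ℕ → ℕ take values in {0,1}. Assume c(N−1) = 0, b'(0) + 2·c'(0) ≥ b(0) + 1, and, for every j with 1 ≤ j ≤ N−1, b'(j) + 2·c'(j) ≥ b(j) + c(j−1). Then Value(b',c',0,N−1) ≥ Value(b,c,0,N−1) + 1. -/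
theorem stmt_2 (N : ℕ) (hN : 2 ≤ N)
    (b c b' c' : ℕ → ℕ)
    (hb : ∀ j, b j ≤ 1) (hc : ∀ j, c j ≤ 1)
    (hb' : ∀ j, b' j ≤ 1) (hc' : ∀ j, c' j ≤ 1)
    (hlast : c (N - 1) = 0)
    (hhead : b' 0 + 2 * c' 0 ≥ b 0 + 1)
    (hstep : ∀ j, 1 ≤ j → j ≤ N - 1 → b' j + 2 * c' j ≥ b j + c (j - 1)) :
    trainValue b' c' 0 (N - 1) ≥ trainValue b c 0 (N - 1) + 1 := by
  have key : ∀ m, m ≤ N - 1 →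
      trainValue b' c' 0 m + 2 ^ (m + 1) * c m ≥ trainValue b c 0 m + 1 := by
    intro m
    induction m with
    | zero =>
      intro _
      simp only [trainValue, Finset.Icc_self, Finset.sum_singleton, Nat.sub_self, pow_zero,
        one_mul]
      omega
    | succ m ih =>
      intro hm
      have ihm := ih (by omega)
      have hstep' := hstep (m + 1) (by omega) hm
      have h1 : trainValue b' c' 0 (m + 1)
          = trainValue b' c' 0 m + 2 ^ (m + 1) * (b' (m + 1) + 2 * c' (m + 1)) := by
        simp [trainValue, Finset.sum_Icc_succ_top (Nat.zero_le (m + 1))]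
      have h2 : trainValue b c 0 (m + 1)
          = trainValue b c 0 m + 2 ^ (m + 1) * (b (m + 1) + 2 * c (m + 1)) := by
        simp [trainValue, Finset.sum_Icc_succ_top (Nat.zero_le (m + 1))]
      have hmul : 2 ^ (m + 1) * (b' (m + 1) + 2 * c' (m + 1))
          ≥ 2 ^ (m + 1) * (b (m + 1) + c m) := Nat.mul_le_mul_left _ hstep'
      have hpow : (2 : ℕ) ^ (m + 1 + 1) = 2 * 2 ^ (m + 1) := by ring
      rw [h1, h2]
      nlinarith [pow_pos (by norm_num : (0:ℕ) < 2) (m + 1)]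
  have := key (N - 1) le_rfl
  rw [hlast] at this
  omega
end

section
/- Let N ≥ 2 and k ≤ N−2 be natural numbers, and let b, c, b', c' : ℕ → ℕ take values in {0,1}. Assume c(N−1) = 0 and, for every j with k+1 ≤ j ≤ N−1, b'(j) + 2·c'(j) = b(j) + c(j−1). Then Value(b',c',k+1,N−1) = ⌊Value(b,c,k,N−1) / 2⌋ (integer division). -/
lemma trainValue_key (b c b' c' : ℕ → ℕ) (k : ℕ) :
    ∀ m, k + 1 ≤ m →
      (∀ j, k + 1 ≤ j → j ≤ m → b' j + 2 * c' j = b j + c (j - 1)) →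
      trainValue b c k m =
        2 * trainValue b' c' (k + 1) m + b k + 2 ^ (m - k + 1) * c m := by
  intro m hm
  induction m, hm using Nat.le_induction with
  | base =>
    intro hstep
    have h1 := hstep (k + 1) le_rfl le_rfl
    simp only [trainValue]
    rw [show Finset.Icc k (k + 1) = {k, k + 1} by
      ext x; simp [Finset.mem_Icc]; omega]
    rw [Finset.sum_pair (by omega), Finset.Icc_self, Finset.sum_singleton]
    simp only [Nat.sub_self, Nat.add_sub_cancel_left, Nat.add_sub_cancel] at *
    omega
  | succ m hm ih =>
    intro hstep
    have ih' := ih (fun j h1 h2 => hstep j h1 (by omega))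
    have hsm := hstep (m + 1) (by omega) le_rfl
    simp only [trainValue] at *
    rw [Finset.sum_Icc_succ_top (by omega : k ≤ m + 1),
      Finset.sum_Icc_succ_top (by omega : k + 1 ≤ m + 1), ih']
    have e1 : m + 1 - k = (m - k) + 1 := by omega
    have e2 : m + 1 - (k + 1) = m - k := by omega
    have e3 : m + 1 - 1 = m := by omega
    rw [e1, e2, e3] at *
    simp only [Nat.add_sub_cancel] at hsm
    rw [hsm]
    ring

theorem stmt_3 (N k : ℕ) (hN : 2 ≤ N) (hk : k ≤ N - 2)
    (b c b' c' : ℕ → ℕ)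
    (hb : ∀ j, b j ≤ 1) (hc : ∀ j, c j ≤ 1)
    (hb' : ∀ j, b' j ≤ 1) (hc' : ∀ j, c' j ≤ 1)
    (hlast : c (N - 1) = 0)
    (hstep : ∀ j, k + 1 ≤ j → j ≤ N - 1 → b' j + 2 * c' j = b j + c (j - 1)) :
    trainValue b' c' (k + 1) (N - 1) = trainValue b c k (N - 1) / 2 := by
  have hm : k + 1 ≤ N - 1 := by omega
  have key := trainValue_key b c b' c' k (N - 1) hm hstep
  have hbk := hb k
  rw [hlast] at key
  omega
end

section
/- Let N ≥ 2 be a natural number and let b, c, b', c' : ℕ → ℕ take values in {0,1}. Assume c(N−1) = 0, b'(0) + 2·c'(0) = b(0) + 1, and, for every j with 1 ≤ j ≤ N−1, b'(j) + 2·c'(j) = b(j) + c(j−1). Then Value(b',c',0,N−1) = Value(b,c,0,N−1) + 1. -/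
theorem stmt_4 (N : ℕ) (hN : 2 ≤ N)
    (b c b' c' : ℕ → ℕ)
    (hb : ∀ j, b j ≤ 1) (hc : ∀ j, c j ≤ 1)
    (hb' : ∀ j, b' j ≤ 1) (hc' : ∀ j, c' j ≤ 1)
    (hlast : c (N - 1) = 0)
    (hhead : b' 0 + 2 * c' 0 = b 0 + 1)
    (hstep : ∀ j, 1 ≤ j → j ≤ N - 1 → b' j + 2 * c' j = b j + c (j - 1)) :
    trainValue b' c' 0 (N - 1) = trainValue b c 0 (N - 1) + 1 := by
  set M := N - 1 with hMdef
  have hM : 1 ≤ M := by omega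
  have hIcc : Finset.Icc 0 M = Finset.range (M + 1) := by
    rw [← Finset.Ico_add_one_right_eq_Icc, ← Finset.range_eq_Ico]
  have key : ∀ j ∈ Finset.range M,
      2 ^ (j + 1) * (b' (j+1) + 2 * c' (j+1)) = 2 ^ (j + 1) * (b (j+1) + c j) := by
    intro j hj
    rw [Finset.mem_range] at hj
    have := hstep (j+1) (by omega) (by omega)
    simp at this
    rw [this]
  have L : trainValue b' c' 0 M
      = (b 0 + 1) + ∑ j ∈ Finset.range M, 2 ^ (j+1) * (b (j+1) + c j) := by
    rw [trainValue, hIcc, Finset.sum_range_succ']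
    simp only [Nat.sub_zero]
    rw [Finset.sum_congr rfl key, hhead]
    ring
  have R : trainValue b c 0 M
      = (b 0 + 2 * c 0) + ∑ j ∈ Finset.range M, 2 ^ (j+1) * (b (j+1) + 2 * c (j+1)) := by
    rw [trainValue, hIcc, Finset.sum_range_succ']
    simp only [Nat.sub_zero]
    ring
  have split1 : ∑ j ∈ Finset.range M, 2 ^ (j+1) * (b (j+1) + c j)
      = (∑ j ∈ Finset.range M, 2 ^ (j+1) * b (j+1))
        + ∑ j ∈ Finset.range M, 2 ^ (j+1) * c j := by
    rw [← Finset.sum_add_distrib]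
    apply Finset.sum_congr rfl
    intro j _; ring
  have split2 : ∑ j ∈ Finset.range M, 2 ^ (j+1) * (b (j+1) + 2 * c (j+1))
      = (∑ j ∈ Finset.range M, 2 ^ (j+1) * b (j+1))
        + ∑ j ∈ Finset.range M, 2 ^ (j+2) * c (j+1) := by
    rw [← Finset.sum_add_distrib]
    apply Finset.sum_congr rfl
    intro j _; ring
  have carry : ∑ j ∈ Finset.range M, 2 ^ (j+1) * c j
      = 2 * c 0 + ∑ j ∈ Finset.range M, 2 ^ (j+2) * c (j+1) := by
    have h1 : ∑ j ∈ Finset.range (M+1), 2 ^ (j+1) * c j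
        = 2 * c 0 + ∑ j ∈ Finset.range M, 2 ^ (j+2) * c (j+1) := by
      rw [Finset.sum_range_succ']
      simp only [show ∀ x:ℕ, x+1+1 = x+2 from fun x => rfl, pow_zero]
      ring
    have h2 : ∑ j ∈ Finset.range (M+1), 2 ^ (j+1) * c j
        = ∑ j ∈ Finset.range M, 2 ^ (j+1) * c j := by
      rw [Finset.sum_range_succ, hlast]
      simp
    rw [← h2, h1]
  rw [L, R, split1, split2, carry]
  ring
end

section
/- Let N ≥ 2 be a natural number and, for each t with 0 ≤ t ≤ N−2, let b^t, c^t : ℕ → ℕ take values in {0,1}. Assume that for every t ≤ N−2 one has c^t(N−1) = 0, and that for every t < N−2 and every j with t+1 ≤ j ≤ N−1, b^{t+1}(j) + 2·c^{t+1}(j) ≥ b^t(j) + c^t(j−1). Then Value(b^{N−2}, c^{N−2}, N−2, N−1) ≥ ⌊Value(b^0, c^0, 0, N−1) / 2^{N−2}⌋. Moreover, if in addition Value(b^0, c^0, 0, N−1) ≥ 2^N, then c^{N−2}(N−2) + b^{N−2}(N−1) ≥ 2. -/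
lemma trainValue_range (b c : ℕ → ℕ) (k m : ℕ) (h : k ≤ m) :
    trainValue b c k m = ∑ i ∈ Finset.range (m - k + 1), 2 ^ i * (b (k + i) + 2 * c (k + i)) := by
  rw [trainValue, ← Finset.Ico_add_one_right_eq_Icc, Finset.sum_Ico_eq_sum_range]
  apply Finset.sum_congr
  · congr 1; omega
  · intro i _
    congr 2
    omega

theorem stmt_5 (N : ℕ) (hN : 2 ≤ N)
    (b c : ℕ → ℕ → ℕ)
    (hb : ∀ t ≤ N - 2, ∀ j, b t j ≤ 1) (hc : ∀ t ≤ N - 2, ∀ j, c t j ≤ 1)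
    (hlast : ∀ t ≤ N - 2, c t (N - 1) = 0)
    (hstep : ∀ t < N - 2, ∀ j, t + 1 ≤ j → j ≤ N - 1 →
      b (t + 1) j + 2 * c (t + 1) j ≥ b t j + c t (j - 1)) :
    trainValue (b (N - 2)) (c (N - 2)) (N - 2) (N - 1) ≥
      trainValue (b 0) (c 0) 0 (N - 1) / 2 ^ (N - 2) ∧
    (trainValue (b 0) (c 0) 0 (N - 1) ≥ 2 ^ N →
      c (N - 2) (N - 2) + b (N - 2) (N - 1) ≥ 2) := by
  -- Key step: one synchronous step at most halves the value (up to floor).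
  have key : ∀ t, t < N - 2 →
      trainValue (b t) (c t) t (N - 1) ≤
        2 * trainValue (b (t + 1)) (c (t + 1)) (t + 1) (N - 1) + 1 := by
    intro t ht
    have htN : t + 2 ≤ N := by omega
    set L := N - 1 - (t + 1) with hL
    have e1 : trainValue (b t) (c t) t (N - 1)
        = ∑ i ∈ Finset.range (L + 2), 2 ^ i * (b t (t + i) + 2 * c t (t + i)) := by
      rw [trainValue_range _ _ _ _ (by omega)]
      apply Finset.sum_congr (by congr 1 <;> omega) (fun i _ => rfl)
    have e2 : trainValue (b (t + 1)) (c (t + 1)) (t + 1) (N - 1)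
        = ∑ i ∈ Finset.range (L + 1),
            2 ^ i * (b (t + 1) (t + 1 + i) + 2 * c (t + 1) (t + 1 + i)) := by
      rw [trainValue_range _ _ _ _ (by omega)]
    -- split V_t
    have split : trainValue (b t) (c t) t (N - 1)
        = b t t + (∑ i ∈ Finset.range (L + 1),
            2 ^ (i + 1) * (b t (t + 1 + i) + c t (t + i))) := by
      rw [e1]
      have bsum : (∑ i ∈ Finset.range (L + 2), 2 ^ i * b t (t + i))
          = b t t + ∑ i ∈ Finset.range (L + 1), 2 ^ (i + 1) * b t (t + 1 + i) := by
        rw [Finset.sum_range_succ']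
        simp only [pow_zero, one_mul, Nat.add_zero]
        rw [add_comm]
        congr 1
        apply Finset.sum_congr rfl
        intro i _
        congr 2
        omega
      have csum : (∑ i ∈ Finset.range (L + 2), 2 ^ i * (2 * c t (t + i)))
          = ∑ i ∈ Finset.range (L + 1), 2 ^ (i + 1) * c t (t + i) := by
        rw [Finset.sum_range_succ]
        have hc0 : c t (t + (L + 1)) = 0 := by
          have : t + (L + 1) = N - 1 := by omega
          rw [this]
          exact hlast t (by omega)
        rw [hc0]
        simp only [mul_zero, add_zero]
        apply Finset.sum_congr rfl
        intro i _
        rw [pow_succ]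
        ring
      calc (∑ i ∈ Finset.range (L + 2), 2 ^ i * (b t (t + i) + 2 * c t (t + i)))
          = (∑ i ∈ Finset.range (L + 2), 2 ^ i * b t (t + i))
            + ∑ i ∈ Finset.range (L + 2), 2 ^ i * (2 * c t (t + i)) := by
            rw [← Finset.sum_add_distrib]
            apply Finset.sum_congr rfl
            intro i _
            ring
        _ = b t t + (∑ i ∈ Finset.range (L + 1), 2 ^ (i + 1) * b t (t + 1 + i))
            + ∑ i ∈ Finset.range (L + 1), 2 ^ (i + 1) * c t (t + i) := by
            rw [bsum, csum]
        _ = b t t + (∑ i ∈ Finset.range (L + 1),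
              2 ^ (i + 1) * (b t (t + 1 + i) + c t (t + i))) := by
            rw [add_assoc, ← Finset.sum_add_distrib]
            congr 1
            apply Finset.sum_congr rfl
            intro i _
            ring
    rw [split, e2]
    have hbt : b t t ≤ 1 := hb t (by omega) t
    have hsum : (∑ i ∈ Finset.range (L + 1), 2 ^ (i + 1) * (b t (t + 1 + i) + c t (t + i)))
        ≤ 2 * ∑ i ∈ Finset.range (L + 1),
            2 ^ i * (b (t + 1) (t + 1 + i) + 2 * c (t + 1) (t + 1 + i)) := by
      rw [Finset.mul_sum]
      apply Finset.sum_le_sum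
      intro i hi
      have hi' : i ≤ L := by simpa [Nat.lt_succ_iff] using hi
      have hs := hstep t ht (t + 1 + i) (by omega) (by omega)
      have hj : t + 1 + i - 1 = t + i := by omega
      rw [hj] at hs
      calc 2 ^ (i + 1) * (b t (t + 1 + i) + c t (t + i))
          ≤ 2 ^ (i + 1) * (b (t + 1) (t + 1 + i) + 2 * c (t + 1) (t + 1 + i)) :=
            Nat.mul_le_mul_left _ hs
        _ = 2 * (2 ^ i * (b (t + 1) (t + 1 + i) + 2 * c (t + 1) (t + 1 + i))) := by ring
    omega
  -- Iterate the key step.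
  have ind : ∀ t ≤ N - 2, trainValue (b 0) (c 0) 0 (N - 1)
      ≤ 2 ^ t * trainValue (b t) (c t) t (N - 1) + (2 ^ t - 1) := by
    intro t
    induction t with
    | zero => intro _; simp
    | succ t ih =>
      intro h
      have ht : t < N - 2 := by omega
      have h1 := ih (by omega)
      have h2 := key t ht
      have hp : 1 ≤ 2 ^ t := Nat.one_le_two_pow
      calc trainValue (b 0) (c 0) 0 (N - 1)
          ≤ 2 ^ t * trainValue (b t) (c t) t (N - 1) + (2 ^ t - 1) := h1
        _ ≤ 2 ^ t * (2 * trainValue (b (t + 1)) (c (t + 1)) (t + 1) (N - 1) + 1)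
            + (2 ^ t - 1) := by
            exact Nat.add_le_add_right (Nat.mul_le_mul_left _ h2) _
        _ = 2 ^ (t + 1) * trainValue (b (t + 1)) (c (t + 1)) (t + 1) (N - 1)
            + (2 ^ (t + 1) - 1) := by
            have h1t : (1:ℕ) ≤ 2 ^ t := Nat.one_le_two_pow
            have h1t' : (1:ℕ) ≤ 2 ^ (t + 1) := Nat.one_le_two_pow
            zify [h1t, h1t']
            ring
  have main := ind (N - 2) le_rfl
  have hpow : (0:ℕ) < 2 ^ (N - 2) := Nat.pow_pos (by norm_num)
  have hdiv : trainValue (b 0) (c 0) 0 (N - 1) / 2 ^ (N - 2)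
      ≤ trainValue (b (N - 2)) (c (N - 2)) (N - 2) (N - 1) := by
    have heq : (2 ^ (N - 2) * trainValue (b (N - 2)) (c (N - 2)) (N - 2) (N - 1)
        + (2 ^ (N - 2) - 1)) / 2 ^ (N - 2)
        = trainValue (b (N - 2)) (c (N - 2)) (N - 2) (N - 1) := by
      rw [Nat.mul_add_div hpow, Nat.div_eq_of_lt (by omega), Nat.add_zero]
    exact heq ▸ Nat.div_le_div_right (c := 2 ^ (N - 2)) main
  refine ⟨hdiv, ?_⟩
  intro hval
  -- value of the final two-wagon train
  have hMN : N - 1 = N - 2 + 1 := by omega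
  have etv : trainValue (b (N - 2)) (c (N - 2)) (N - 2) (N - 1)
      = b (N - 2) (N - 2) + 2 * c (N - 2) (N - 2) + 2 * b (N - 2) (N - 2 + 1) := by
    rw [trainValue, hMN, Finset.sum_Icc_succ_top (Nat.le_succ (N - 2)), Finset.Icc_self,
      Finset.sum_singleton]
    have hclast : c (N - 2) (N - 2 + 1) = 0 := by
      have := hlast (N - 2) le_rfl
      rwa [hMN] at this
    rw [hclast, Nat.sub_self, Nat.add_sub_cancel_left]
    ring
  have h4 : 4 ≤ trainValue (b (N - 2)) (c (N - 2)) (N - 2) (N - 1) := by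
    have h1 : 2 ^ N / 2 ^ (N - 2) ≤ trainValue (b 0) (c 0) 0 (N - 1) / 2 ^ (N - 2) :=
      Nat.div_le_div_right hval
    have h2 : (2:ℕ) ^ N / 2 ^ (N - 2) = 4 := by
      have he : (2:ℕ) ^ N = 2 ^ (N - 2) * 4 := by
        have hN2 : N = (N - 2) + 2 := by omega
        rw [hN2]
        rw [pow_add]
        norm_num
      rw [he, Nat.mul_div_cancel_left _ hpow]
    omega
  have hb1 : b (N - 2) (N - 2) ≤ 1 := hb (N - 2) le_rfl (N - 2)
  have hb2 : b (N - 2) (N - 2 + 1) ≤ 1 := hb (N - 2) le_rfl (N - 2 + 1)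
  have hc1 : c (N - 2) (N - 2) ≤ 1 := hc (N - 2) le_rfl (N - 2)
  rw [etv] at h4
  rw [hMN]
  omega
end

section
/- Let N ≥ 5 be an integer, let a ∈ {0, …, N−1}, and let K be a natural number with K < 2^N. For every natural number k, let i_k := (a − k) mod N ∈ {0, …, N−1}. Let b, c : ℕ → ℕ take values in {0,1} and assume that for every k ≤ K: Σ_{j=0}^{min(k, N−1−i_k)} 2^j · (b(k−j) + 2·c(k−j)) = ⌊k / 2^{i_k}⌋. Define b', c' : ℕ → ℕ by b'(0) = 0, c'(0) = 0 and, for k ≥ 1, setting s_k := b(k−1) + 1 if i_{k−1} = 0 and s_k := b(k−1) + c(k) otherwise, b'(k) := s_k mod 2 and c'(k) := ⌊s_k / 2⌋. Let i'_k := (a + 1 − k) mod N. Then for every k ≤ K: Σ_{j=0}^{min(k, N−1−i'_k)} 2^j · (b'(k−j) + 2·c'(k−j)) = ⌊k / 2^{i'_k}⌋. -/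
/-- The index of the wagon in layer `k`, when layer `0` has index `a` and
indices decrease by one (mod `N`) per layer: `i_k = (a − k) mod N`. -/
def layerIdx (N a k : ℕ) : ℕ := (((a : ℤ) - (k : ℤ)) % (N : ℤ)).toNat

/-- The value of the partial train starting at layer `k`, made of the wagons
at layers `k, k−1, …, k − min(k, N−1−i_k)`, where `i_k = layerIdx N a k`:
`Σ_{j=0}^{min(k, N−1−i_k)} 2^j · (b(k−j) + 2·c(k−j))`. -/
def layerTrainValue (N a : ℕ) (b c : ℕ → ℕ) (k : ℕ) : ℕ :=
  ∑ j ∈ Finset.range (min k (N - 1 - layerIdx N a k) + 1),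
    2 ^ j * (b (k - j) + 2 * c (k - j))

lemma layerIdx_lt (N a k : ℕ) (hN : 0 < N) : layerIdx N a k < N := by
  have h1 := Int.emod_lt_of_pos ((a : ℤ) - k) (show (0:ℤ) < N by exact_mod_cast hN)
  have h2 := Int.emod_nonneg ((a : ℤ) - k) (show (N:ℤ) ≠ 0 by exact_mod_cast hN.ne')
  unfold layerIdx
  omega

lemma layerIdx_succ_shift (N a k : ℕ) : layerIdx N (a+1) (k+1) = layerIdx N a k := by
  have h : ((a+1:ℕ):ℤ) - ((k+1:ℕ):ℤ) = (a:ℤ) - k := by push_cast; ring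
  simp [layerIdx, h]

lemma layerIdx_step (N a k : ℕ) (hN : 0 < N) :
    layerIdx N a k = (layerIdx N a (k+1) + 1) % N := by
  have hNz : (N:ℤ) ≠ 0 := by exact_mod_cast hN.ne'
  have h1 : ((a:ℤ) - ((k+1:ℕ):ℤ)) % N = (layerIdx N a (k+1) : ℤ) :=
    (Int.toNat_of_nonneg (Int.emod_nonneg _ hNz)).symm
  have key : ((a:ℤ) - k) % N = (((layerIdx N a (k+1) + 1) % N : ℕ) : ℤ) := by
    push_cast
    rw [← h1, Int.emod_add_emod]
    congr 1
    push_cast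
    ring
  unfold layerIdx
  rw [key, Int.toNat_natCast]
  rfl

lemma mod_succ_cases (x i N : ℕ) (hx : x < N) (h : (x+1) % N = i) :
    (i = 0 ∧ x = N - 1) ∨ x + 1 = i := by
  rcases Nat.lt_or_ge (x+1) N with h' | h'
  · right; rw [Nat.mod_eq_of_lt h'] at h; omega
  · left
    have hxN : x + 1 = N := by omega
    rw [hxN, Nat.mod_self] at h
    omega

/-- Peel the head wagon off a partial-train sum (layer `k+1` form). -/
lemma peel_succ (m k : ℕ) (b c : ℕ → ℕ) :
    ∑ j ∈ Finset.range (m+1), 2 ^ j * (b (k+1-j) + 2 * c (k+1-j))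
      = (b (k+1) + 2 * c (k+1)) + 2 * ∑ j ∈ Finset.range m, 2 ^ j * (b (k-j) + 2 * c (k-j)) := by
  rw [Finset.sum_range_succ']
  simp only [Nat.succ_sub_succ, pow_succ, pow_zero, one_mul, Finset.mul_sum]
  rw [add_comm]
  congr 1
  apply Finset.sum_congr rfl
  intro j _
  ring

/-- Peel the head wagon off a partial-train sum (general form). -/
lemma peel0 (m k : ℕ) (b c : ℕ → ℕ) :
    ∑ j ∈ Finset.range (m+1), 2 ^ j * (b (k-j) + 2 * c (k-j))
      = (b k + 2 * c k) + 2 * ∑ j ∈ Finset.range m, 2 ^ j * (b (k-(j+1)) + 2 * c (k-(j+1))) := by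
  rw [Finset.sum_range_succ']
  simp only [Nat.sub_zero, pow_succ, pow_zero, one_mul, Finset.mul_sum]
  rw [add_comm]
  congr 1
  apply Finset.sum_congr rfl
  intro j _
  ring

theorem stmt_11 (N : ℕ) (hN : 5 ≤ N) (a : ℕ) (ha : a < N)
    (K : ℕ) (hK : K < 2 ^ N)
    (b c b' c' : ℕ → ℕ)
    (hb : ∀ j, b j ≤ 1) (hc : ∀ j, c j ≤ 1)
    (hval : ∀ k ≤ K, layerTrainValue N a b c k = k / 2 ^ layerIdx N a k)
    (hb'0 : b' 0 = 0) (hc'0 : c' 0 = 0)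
    (hstep : ∀ k, 1 ≤ k →
      b' k = (if layerIdx N a (k - 1) = 0 then b (k - 1) + 1
              else b (k - 1) + c k) % 2 ∧
      c' k = (if layerIdx N a (k - 1) = 0 then b (k - 1) + 1
              else b (k - 1) + c k) / 2) :
    ∀ k ≤ K, layerTrainValue N (a + 1) b' c' k = k / 2 ^ layerIdx N (a + 1) k := by
  have hN0 : 0 < N := by omega
  intro k
  induction k with
  | zero =>
      intro _
      simp [layerTrainValue, hb'0, hc'0]
  | succ k ih =>
      intro hk1
      have hkK : k ≤ K := by omega
      have ihv := ih hkK
      set i := layerIdx N a k with hidef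
      have hi : i < N := layerIdx_lt N a k hN0
      have hidx : layerIdx N (a+1) (k+1) = i := layerIdx_succ_shift N a k
      -- the new wagon at layer k+1
      have hw' : b' (k+1) + 2 * c' (k+1)
          = (if i = 0 then b k + 1 else b k + c (k+1)) := by
        obtain ⟨h1, h2⟩ := hstep (k+1) (by omega)
        simp only [Nat.add_sub_cancel, ← hidef] at h1 h2
        rw [h1, h2]
        omega
      -- old index at layer k+1
      have hxstep := layerIdx_step N a k hN0
      have hxlt : layerIdx N a (k+1) < N := layerIdx_lt N a (k+1) hN0
      have hxcases := mod_succ_cases (layerIdx N a (k+1)) i N hxlt hxstep.symm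
      -- old invariant at layer k, peeled
      have hvk := hval k hkK
      unfold layerTrainValue at hvk
      rw [← hidef, peel0] at hvk
      -- hvk : b k + 2*c k + 2 * R = k / 2^i
      unfold layerTrainValue
      rw [hidx]
      by_cases hiN : i = N - 1
      · -- head of new train is the tail wagon (index N-1)
        have hx : layerIdx N a (k+1) = i - 1 := by omega
        have hmin0 : min (k+1) (N - 1 - i) = 0 := by omega
        rw [hmin0, Finset.sum_range_one, pow_zero, one_mul]
        simp only [Nat.sub_zero]
        rw [hw', if_neg (by omega)]
        -- invariant at layer k+1 (old indices)
        have hvk1 := hval (k+1) hk1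
        unfold layerTrainValue at hvk1
        rw [hx] at hvk1
        have hm1 : min (k+1) (N - 1 - (i-1)) = 1 := by omega
        rw [hm1, peel_succ, Finset.sum_range_one, pow_zero, one_mul] at hvk1
        simp only [Nat.sub_zero] at hvk1
        have hmk : min k (N - 1 - i) = 0 := by omega
        rw [hmk, Finset.sum_range_zero] at hvk
        -- hvk : b k + 2 * c k + 2 * 0 = k / 2^i
        have hd1 : (k+1) / 2 ^ (i-1) / 2 = (k+1) / 2 ^ i := by
          rw [Nat.div_div_eq_div_mul, ← pow_succ]
          congr 2
          omega
        have hq : k / 2 ^ i < 2 := by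
          apply Nat.div_lt_of_lt_mul
          have : 2 ^ i * 2 = 2 ^ N := by rw [← pow_succ]; congr 1; omega
          omega
        have hb1 := hb k; have hb2 := hb (k+1); have hc2 := hc (k+1)
        omega
      · -- head of new train has index i ≤ N-2
        have hiN2 : i ≤ N - 2 := by omega
        have hidx2 : layerIdx N (a+1) k = i + 1 := by
          have h := layerIdx_step N (a+1) k hN0
          rw [hidx] at h
          rw [h, Nat.mod_eq_of_lt (by omega)]
        have hm : min (k+1) (N - 1 - i) = min k (N - 2 - i) + 1 := by omega
        rw [hm, peel_succ, hw']
        unfold layerTrainValue at ihv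
        rw [hidx2] at ihv
        have hm2 : N - 1 - (i + 1) = N - 2 - i := by omega
        rw [hm2] at ihv
        rw [ihv]
        by_cases hi0 : i = 0
        · rw [if_pos hi0]
          rw [hi0] at hvk ⊢
          simp only [pow_zero, Nat.div_one, pow_one] at hvk ⊢
          have hb1 := hb k
          omega
        · rw [if_neg hi0]
          -- invariant at layer k+1: new-head index is i, old index at k+1 is i-1
          have hx : layerIdx N a (k+1) = i - 1 := by omega
          have hvk1 := hval (k+1) hk1
          unfold layerTrainValue at hvk1
          rw [hx] at hvk1
          have hm1 : min (k+1) (N - 1 - (i-1)) = min k (N - 1 - i) + 1 := by omega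
          rw [hm1, peel_succ] at hvk1
          -- replace inner sum by k / 2^i using hval k (unpeeled)
          have hvk' := hval k hkK
          unfold layerTrainValue at hvk'
          rw [← hidef] at hvk'
          rw [hvk'] at hvk1
          -- hvk1 : b (k+1) + 2*c (k+1) + 2*(k/2^i) = (k+1)/2^(i-1)
          have hd1 : (k+1) / 2 ^ (i-1) / 2 = (k+1) / 2 ^ i := by
            rw [Nat.div_div_eq_div_mul, ← pow_succ]
            congr 2
            omega
          have hd2 : k / 2 ^ i / 2 = k / 2 ^ (i+1) := by
            rw [Nat.div_div_eq_div_mul, ← pow_succ]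
          have hb1 := hb k; have hb2 := hb (k+1); have hc2 := hc (k+1)
          omega
end
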